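/- Let d_w > 0, d > 0, set d_s = 2d/d_w, and let α₁, α₂, β ∈ (0, d_w), ā₁, ā₂ > 0, c₁ > 0, s₀ > 0. Then there exists a constant C > 0 such that the following holds: for every t > 0, every integer M ≥ 0, every probability measure η on (0,∞), and every function φ : (0,∞) → [0,∞) satisfying ∫_{(0,∞)} e^{−λu} dη(u) = e^{−tφ(λ)} for all λ > 0, with φ(λ) ≥ ā₁·λ^{α₁/d_w} for λ ∈ (0,1], φ(λ) ≥ ā₂·λ^{α₂/d_w} for λ ≥ 1, and φ(λ) ≤ c₁·λ^{β/d_w} for λ ∈ (0, s₀], one has ∫_{(0,∞)} max(u^{−d_s/2}, 2^{−Md}) dη(u) ≤ C·((t ∧ 2^{Mβ})^{−d/α₁} + (t ∧ 2^{Mβ})^{−d/α₂} + (t ∧ 2^{Mβ})^{−d/β}), where a ∧ b = min(a,b). -/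

import Mathlib

/-!
Since `max a b ≤ a + b` and `2 ^ (-M d) = (2 ^ (M β)) ^ (-d / β) ≤ (t ∧ 2 ^ (M β)) ^ (-d / β)`,
it suffices to bound the negative moment `∫ u ^ (-γ) dη`, `γ = d / d_w = d_s / 2`. Writing
`u ^ (-γ) Γ(γ) = ∫₀^∞ l ^ (γ - 1) e^{-l u} dl` and exchanging the integrals gives
`Γ(γ) ∫ u ^ (-γ) dη = ∫₀^∞ l ^ (γ - 1) e^{-t φ(l)} dl`. The lower scaling bounds on `φ` on `(0, 1]`
and on `[1, ∞)` dominate `e^{-t φ(l)}` by two stretched exponentials, whose Gamma integrals are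
of order `t ^ (-d / α₁)` and `t ^ (-d / α₂)`.
-/

open MeasureTheory Set Real

theorem lintegral_rpow_mul_exp_neg_mul_rpow {p q b : ℝ} (hp : 0 < p) (hq : -1 < q)
    (hb : 0 < b) :
    ∫⁻ x in Ioi (0 : ℝ), ENNReal.ofReal (x ^ q * exp (-b * x ^ p)) =
      ENNReal.ofReal (b ^ (-(q + 1) / p) * (1 / p) * Gamma ((q + 1) / p)) := by
  rw [← ofReal_integral_eq_lintegral_ofReal (integrableOn_rpow_mul_exp_neg_mul_rpow hq hp hb),
    integral_rpow_mul_exp_neg_mul_rpow hp hq hb]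
  filter_upwards [ae_restrict_mem measurableSet_Ioi] with x hx
  exact mul_nonneg (rpow_nonneg hx.le q) (exp_pos _).le

theorem lintegral_rpow_sub_one_mul_exp_neg_mul_rpow {γ p b : ℝ} (hγ : 0 < γ) (hp : 0 < p)
    (hb : 0 < b) :
    ∫⁻ l in Ioi (0 : ℝ), ENNReal.ofReal (l ^ (γ - 1) * exp (-b * l ^ p)) =
      ENNReal.ofReal (b ^ (-(γ / p)) * (1 / p) * Gamma (γ / p)) := by
  rw [lintegral_rpow_mul_exp_neg_mul_rpow hp (by linarith) hb, sub_add_cancel, neg_div]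

theorem ofReal_rpow_neg_mul_Gamma {γ u : ℝ} (hγ : 0 < γ) (hu : 0 < u) :
    ENNReal.ofReal (u ^ (-γ) * Gamma γ) =
      ∫⁻ l in Ioi (0 : ℝ), ENNReal.ofReal (l ^ (γ - 1)) * ENNReal.ofReal (exp (-(l * u))) := by
  have h := lintegral_rpow_mul_exp_neg_mul_rpow one_pos (by linarith : -1 < γ - 1) hu
  simp only [sub_add_cancel, div_one, rpow_one, mul_one] at h
  rw [← h]
  refine setLIntegral_congr_fun measurableSet_Ioi fun l hl => ?_
  rw [← ENNReal.ofReal_mul (rpow_nonneg hl.le _), neg_mul, mul_comm u]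

theorem lintegral_rpow_neg_mul_Gamma {γ : ℝ} (hγ : 0 < γ) (μ : Measure ℝ) [SFinite μ] :
    (∫⁻ u in Ioi (0 : ℝ), ENNReal.ofReal (u ^ (-γ)) ∂μ) * ENNReal.ofReal (Gamma γ) =
      ∫⁻ l in Ioi (0 : ℝ), ENNReal.ofReal (l ^ (γ - 1)) *
        ∫⁻ u in Ioi (0 : ℝ), ENNReal.ofReal (exp (-(l * u))) ∂μ := by
  calc (∫⁻ u in Ioi (0 : ℝ), ENNReal.ofReal (u ^ (-γ)) ∂μ) * ENNReal.ofReal (Gamma γ)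
      = ∫⁻ u in Ioi (0 : ℝ), (∫⁻ l in Ioi (0 : ℝ),
          ENNReal.ofReal (l ^ (γ - 1)) * ENNReal.ofReal (exp (-(l * u)))) ∂μ := by
        rw [← lintegral_mul_const' _ _ ENNReal.ofReal_ne_top]
        refine setLIntegral_congr_fun measurableSet_Ioi fun u hu => ?_
        rw [← ofReal_rpow_neg_mul_Gamma hγ hu, ENNReal.ofReal_mul (rpow_nonneg hu.le _)]
    _ = _ := by
        rw [lintegral_lintegral_swap (Measurable.aemeasurable (by fun_prop))]
        simp_rw [lintegral_const_mul' _ _ ENNReal.ofReal_ne_top]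

theorem lintegral_ofReal_exp_neg_mul {l : ℝ} (hl : 0 < l) (μ : Measure ℝ) [IsFiniteMeasure μ] :
    ∫⁻ u in Ioi (0 : ℝ), ENNReal.ofReal (exp (-(l * u))) ∂μ =
      ENNReal.ofReal (∫ u in Ioi (0 : ℝ), exp (-l * u) ∂μ) := by
  have hbound : ∀ᵐ u ∂μ.restrict (Ioi 0), ‖exp (-l * u)‖ ≤ 1 := by
    filter_upwards [ae_restrict_mem measurableSet_Ioi] with u hu
    rw [norm_of_nonneg (exp_pos _).le, exp_le_one_iff, neg_mul, neg_nonpos]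
    exact (mul_pos hl hu).le
  rw [ofReal_integral_eq_lintegral_ofReal
    (Integrable.of_bound (by fun_prop) 1 hbound) (ae_of_all _ fun u => (exp_pos _).le)]
  simp only [neg_mul]

theorem exp_neg_mul_le_add_of_lower_scaling {φ : ℝ → ℝ} {p₁ p₂ b₁ b₂ t l : ℝ} (ht : 0 ≤ t)
    (hl : 0 < l) (h₁ : ∀ l : ℝ, 0 < l → l ≤ 1 → b₁ * l ^ p₁ ≤ φ l)
    (h₂ : ∀ l : ℝ, 1 ≤ l → b₂ * l ^ p₂ ≤ φ l) :
    exp (-(t * φ l)) ≤ exp (-(t * b₁) * l ^ p₁) + exp (-(t * b₂) * l ^ p₂) := by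
  rcases le_total l 1 with hle | hge
  · refine le_add_of_le_of_nonneg (exp_le_exp.mpr ?_) (exp_pos _).le
    nlinarith [h₁ l hl hle]
  · refine le_add_of_nonneg_of_le (exp_pos _).le (exp_le_exp.mpr ?_)
    nlinarith [h₂ l hge]

noncomputable def negMomentConst (γ p b : ℝ) : ℝ :=
  b ^ (-(γ / p)) * (1 / p) * Gamma (γ / p) / Gamma γ

theorem negMomentConst_nonneg {γ p b : ℝ} (hγ : 0 ≤ γ) (hp : 0 ≤ p) (hb : 0 ≤ b) :
    0 ≤ negMomentConst γ p b := by
  have := Gamma_nonneg_of_nonneg (div_nonneg hγ hp)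
  have := Gamma_nonneg_of_nonneg hγ
  unfold negMomentConst
  positivity

theorem lintegral_rpow_neg_le_of_lower_scaling {γ p₁ p₂ b₁ b₂ t : ℝ} (hγ : 0 < γ)
    (hp₁ : 0 < p₁) (hp₂ : 0 < p₂) (hb₁ : 0 < b₁) (hb₂ : 0 < b₂) (ht : 0 < t)
    (η : Measure ℝ) [IsFiniteMeasure η] (φ : ℝ → ℝ)
    (hlap : ∀ l : ℝ, 0 < l →
      ∫ u in Ioi (0 : ℝ), exp (-l * u) ∂η = exp (-(t * φ l)))
    (h₁ : ∀ l : ℝ, 0 < l → l ≤ 1 → b₁ * l ^ p₁ ≤ φ l)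
    (h₂ : ∀ l : ℝ, 1 ≤ l → b₂ * l ^ p₂ ≤ φ l) :
    ∫⁻ u in Ioi (0 : ℝ), ENNReal.ofReal (u ^ (-γ)) ∂η ≤
      ENNReal.ofReal (negMomentConst γ p₁ b₁ * t ^ (-(γ / p₁)) +
        negMomentConst γ p₂ b₂ * t ^ (-(γ / p₂))) := by
  have hΓ : 0 < Gamma γ := Gamma_pos_of_pos hγ
  have hΓ₁ : 0 < Gamma (γ / p₁) := Gamma_pos_of_pos (div_pos hγ hp₁)
  have hΓ₂ : 0 < Gamma (γ / p₂) := Gamma_pos_of_pos (div_pos hγ hp₂)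
  have hmul : (∫⁻ u in Ioi (0 : ℝ), ENNReal.ofReal (u ^ (-γ)) ∂η) * ENNReal.ofReal (Gamma γ) ≤
      ENNReal.ofReal ((t * b₁) ^ (-(γ / p₁)) * (1 / p₁) * Gamma (γ / p₁)) +
        ENNReal.ofReal ((t * b₂) ^ (-(γ / p₂)) * (1 / p₂) * Gamma (γ / p₂)) := by
    rw [lintegral_rpow_neg_mul_Gamma hγ,
      ← lintegral_rpow_sub_one_mul_exp_neg_mul_rpow hγ hp₁ (mul_pos ht hb₁),
      ← lintegral_rpow_sub_one_mul_exp_neg_mul_rpow hγ hp₂ (mul_pos ht hb₂),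
      ← lintegral_add_left (by fun_prop)]
    refine setLIntegral_mono' measurableSet_Ioi fun l (hl : 0 < l) => ?_
    rw [lintegral_ofReal_exp_neg_mul hl, hlap l hl, ← ENNReal.ofReal_mul (rpow_nonneg hl.le _),
      ← ENNReal.ofReal_add (by positivity) (by positivity), ← mul_add]
    exact ENNReal.ofReal_le_ofReal (mul_le_mul_of_nonneg_left
      (exp_neg_mul_le_add_of_lower_scaling ht.le hl h₁ h₂) (rpow_nonneg hl.le _))
  rw [← ENNReal.ofReal_add (by positivity) (by positivity),
    ← ENNReal.le_div_iff_mul_le (Or.inl (by simpa using hΓ)) (Or.inl ENNReal.ofReal_ne_top),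
    ← ENNReal.ofReal_div_of_pos hΓ] at hmul
  refine hmul.trans_eq (congrArg ENNReal.ofReal ?_)
  simp only [negMomentConst, mul_rpow ht.le hb₁.le, mul_rpow ht.le hb₂.le]
  ring

theorem setLIntegral_ofReal_max_le {α : Type*} [MeasurableSpace α] (μ : Measure α)
    [IsProbabilityMeasure μ] (s : Set α) (f : α → ℝ) (c : ℝ) :
    ∫⁻ x in s, ENNReal.ofReal (max (f x) c) ∂μ ≤
      ∫⁻ x in s, ENNReal.ofReal (f x) ∂μ + ENNReal.ofReal c := by
  calc ∫⁻ x in s, ENNReal.ofReal (max (f x) c) ∂μ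
      ≤ ∫⁻ x in s, (ENNReal.ofReal (f x) + ENNReal.ofReal c) ∂μ :=
        lintegral_mono fun x => by
          rw [ENNReal.ofReal_max]
          exact max_le_add_of_nonneg zero_le zero_le
    _ = ∫⁻ x in s, ENNReal.ofReal (f x) ∂μ + ENNReal.ofReal c * μ s := by
        rw [lintegral_add_right _ measurable_const, setLIntegral_const]
    _ ≤ ∫⁻ x in s, ENNReal.ofReal (f x) ∂μ + ENNReal.ofReal c := by
        gcongr
        exact mul_le_of_le_one_right zero_le prob_le_one

theorem two_rpow_neg_mul_le_min_rpow_neg {t M d β : ℝ} (ht : 0 < t) (hd : 0 ≤ d) (hβ : 0 < β) :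
    (2:ℝ) ^ (-(M * d)) ≤ (min t ((2:ℝ) ^ (M * β))) ^ (-(d / β)) := by
  have h : (2:ℝ) ^ (-(M * d)) = ((2:ℝ) ^ (M * β)) ^ (-(d / β)) := by
    rw [← rpow_mul zero_le_two]
    congr 1
    field_simp
  rw [h]
  exact rpow_le_rpow_of_nonpos (lt_min ht (by positivity)) (min_le_right _ _)
    (neg_nonpos.mpr (div_nonneg hd hβ.le))

theorem stmt_13_general (d_w d ds α₁ α₂ β a₁ a₂ c₁ s₀ : ℝ)
    (hdw : 0 < d_w) (hd : 0 < d) (hds : ds = 2 * d / d_w)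
    (hα₁ : 0 < α₁ ∧ α₁ < d_w) (hα₂ : 0 < α₂ ∧ α₂ < d_w) (hβ : 0 < β ∧ β < d_w)
    (ha₁ : 0 < a₁) (ha₂ : 0 < a₂) :
    ∃ C : ℝ, 0 < C ∧
      ∀ (t : ℝ), 0 < t → ∀ (M : ℕ),
      ∀ (η : Measure ℝ), IsProbabilityMeasure η → η (Set.Iic 0) = 0 →
      ∀ (φ : ℝ → ℝ), (∀ l : ℝ, 0 < l → 0 ≤ φ l) →
        (∀ l : ℝ, 0 < l →
          ∫ u in Set.Ioi (0:ℝ), Real.exp (-l * u) ∂η = Real.exp (-(t * φ l))) →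
        (∀ l : ℝ, 0 < l → l ≤ 1 → a₁ * l ^ (α₁ / d_w) ≤ φ l) →
        (∀ l : ℝ, 1 ≤ l → a₂ * l ^ (α₂ / d_w) ≤ φ l) →
        (∀ l : ℝ, 0 < l → l ≤ s₀ → φ l ≤ c₁ * l ^ (β / d_w)) →
        ∫⁻ u in Set.Ioi (0:ℝ),
            ENNReal.ofReal (max (u ^ (-(ds / 2))) ((2:ℝ) ^ (-((M:ℝ) * d)))) ∂η
          ≤ ENNReal.ofReal (C *
              ((min t ((2:ℝ) ^ ((M:ℝ) * β))) ^ (-(d / α₁)) +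
               (min t ((2:ℝ) ^ ((M:ℝ) * β))) ^ (-(d / α₂)) +
               (min t ((2:ℝ) ^ ((M:ℝ) * β))) ^ (-(d / β)))) := by
  have hγ : 0 < d / d_w := div_pos hd hdw
  have hexp : ∀ α : ℝ, 0 < α → d / d_w / (α / d_w) = d / α := fun α hα => by field_simp
  set K₁ := negMomentConst (d / d_w) (α₁ / d_w) a₁
  set K₂ := negMomentConst (d / d_w) (α₂ / d_w) a₂
  have hK₁ : 0 ≤ K₁ := negMomentConst_nonneg hγ.le (div_pos hα₁.1 hdw).le ha₁.le
  have hK₂ : 0 ≤ K₂ := negMomentConst_nonneg hγ.le (div_pos hα₂.1 hdw).le ha₂.le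
  refine ⟨K₁ + K₂ + 1, by positivity, fun t ht M η hη _ φ _ hlap h₁ h₂ _ => ?_⟩
  set m := min t ((2:ℝ) ^ ((M:ℝ) * β))
  have hm : 0 < m := lt_min ht (by positivity)
  have hmoment := lintegral_rpow_neg_le_of_lower_scaling hγ (div_pos hα₁.1 hdw)
    (div_pos hα₂.1 hdw) ha₁ ha₂ ht η φ hlap h₁ h₂
  rw [hexp α₁ hα₁.1, hexp α₂ hα₂.1] at hmoment
  have hmin : ∀ x : ℝ, 0 < x → t ^ (-x) ≤ m ^ (-x) := fun x hx =>
    rpow_le_rpow_of_nonpos hm (min_le_left _ _) (neg_nonpos.mpr hx.le)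
  have hds' : -(ds / 2) = -(d / d_w) := by rw [hds]; ring
  calc ∫⁻ u in Set.Ioi (0:ℝ),
        ENNReal.ofReal (max (u ^ (-(ds / 2))) ((2:ℝ) ^ (-((M:ℝ) * d)))) ∂η
      ≤ ∫⁻ u in Set.Ioi (0:ℝ), ENNReal.ofReal (u ^ (-(d / d_w))) ∂η +
          ENNReal.ofReal ((2:ℝ) ^ (-((M:ℝ) * d))) := by
        rw [hds']; exact setLIntegral_ofReal_max_le η _ _ _
    _ ≤ ENNReal.ofReal (K₁ * t ^ (-(d / α₁)) + K₂ * t ^ (-(d / α₂))) +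
          ENNReal.ofReal (m ^ (-(d / β))) :=
        add_le_add hmoment (ENNReal.ofReal_le_ofReal
          (two_rpow_neg_mul_le_min_rpow_neg ht hd.le hβ.1))
    _ ≤ ENNReal.ofReal (K₁ * m ^ (-(d / α₁)) + K₂ * m ^ (-(d / α₂)) + m ^ (-(d / β))) := by
        rw [← ENNReal.ofReal_add (by positivity) (by positivity)]
        refine ENNReal.ofReal_le_ofReal (add_le_add_left (add_le_add ?_ ?_) _)
        exacts [mul_le_mul_of_nonneg_left (hmin _ (div_pos hd hα₁.1)) hK₁,
          mul_le_mul_of_nonneg_left (hmin _ (div_pos hd hα₂.1)) hK₂]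
    _ ≤ _ := by
        refine ENNReal.ofReal_le_ofReal ?_
        have : 0 ≤ m ^ (-(d / α₁)) := by positivity
        have : 0 ≤ m ^ (-(d / α₂)) := by positivity
        have : 0 ≤ m ^ (-(d / β)) := by positivity
        nlinarith

/-- The analytic core of Lemma 4.2 of the paper: under the weak scaling bounds on the
Laplace exponent `φ`, the law `η` of the subordinator at time `t` satisfies
`∫ max(u^{-d_s/2}, 2^{-Md}) dη(u)
  ≤ C ((t ∧ 2^{Mβ})^{-d/α₁} + (t ∧ 2^{Mβ})^{-d/α₂} + (t ∧ 2^{Mβ})^{-d/β})`. -/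
theorem stmt_13 (d_w d ds α₁ α₂ β a₁ a₂ c₁ s₀ : ℝ)
    (hdw : 0 < d_w) (hd : 0 < d) (hds : ds = 2 * d / d_w)
    (hα₁ : 0 < α₁ ∧ α₁ < d_w) (hα₂ : 0 < α₂ ∧ α₂ < d_w) (hβ : 0 < β ∧ β < d_w)
    (ha₁ : 0 < a₁) (ha₂ : 0 < a₂) (hc₁ : 0 < c₁) (hs₀ : 0 < s₀) :
    ∃ C : ℝ, 0 < C ∧
      ∀ (t : ℝ), 0 < t → ∀ (M : ℕ),
      ∀ (η : Measure ℝ), IsProbabilityMeasure η → η (Set.Iic 0) = 0 →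
      ∀ (φ : ℝ → ℝ), (∀ l : ℝ, 0 < l → 0 ≤ φ l) →
        (∀ l : ℝ, 0 < l →
          ∫ u in Set.Ioi (0:ℝ), Real.exp (-l * u) ∂η = Real.exp (-(t * φ l))) →
        (∀ l : ℝ, 0 < l → l ≤ 1 → a₁ * l ^ (α₁ / d_w) ≤ φ l) →
        (∀ l : ℝ, 1 ≤ l → a₂ * l ^ (α₂ / d_w) ≤ φ l) →
        (∀ l : ℝ, 0 < l → l ≤ s₀ → φ l ≤ c₁ * l ^ (β / d_w)) →
        ∫⁻ u in Set.Ioi (0:ℝ),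
            ENNReal.ofReal (max (u ^ (-(ds / 2))) ((2:ℝ) ^ (-((M:ℝ) * d)))) ∂η
          ≤ ENNReal.ofReal (C *
              ((min t ((2:ℝ) ^ ((M:ℝ) * β))) ^ (-(d / α₁)) +
               (min t ((2:ℝ) ^ ((M:ℝ) * β))) ^ (-(d / α₂)) +
               (min t ((2:ℝ) ^ ((M:ℝ) * β))) ^ (-(d / β)))) :=
  stmt_13_general d_w d ds α₁ α₂ β a₁ a₂ c₁ s₀ hdw hd hds hα₁ hα₂ hβ ha₁ ha₂
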